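/- For distinct primes p and q and n = pq, the DFT h_m(n) = Σ_{k=1}^n gcd(k,n)·e^{-2πikm/n} takes only the four values: φ(n) if gcd(m,n)=1; (2p−1)(q−1) if gcd(m,n)=p; (p−1)(2q−1) if gcd(m,n)=q; and (2p−1)(2q−1) if gcd(m,n)=pq. -/

import Mathlib

/-!
With `ζ = exp (-2πi / n)`, Gauss's identity `gcd k n = ∑_{d ∣ gcd k n} φ d` turns the transform
into a combination of sums of `ζ ^ (k m)` over the multiples `k` of each divisor `d` of `n`; such a
sum runs over the powers of the primitive `n / d`-th root `ζ ^ d`, so it is `n / d` or `0`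
according as `n / d ∣ m`. Reindexing by `d ↦ n / d` gives `h_m(n) = ∑_{d ∣ gcd m n} d φ (n / d)`,
which for `n = p q` is evaluated on the four divisors `1, p, q, p q`.
-/

open Finset
open scoped Nat

theorem Finset.sum_Icc_one_eq_sum_range {M : Type*} [AddCommMonoid M] {f : ℕ → M} {n : ℕ}
    (hf : f n = f 0) : ∑ k ∈ Icc 1 n, f k = ∑ k ∈ range n, f k := by
  rcases n.eq_zero_or_pos with rfl | hn
  · simp
  rw [← Finset.Ico_add_one_right_eq_Icc, sum_Ico_succ_top (by omega), range_eq_Ico,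
    sum_eq_sum_Ico_succ_bot hn, hf, add_comm]

theorem Finset.filter_dvd_range_mul {d : ℕ} (hd : d ≠ 0) (e : ℕ) :
    {k ∈ range (d * e) | d ∣ k} = (range e).image (d * ·) := by
  ext k
  simp only [mem_filter, mem_range, mem_image]
  constructor
  · rintro ⟨hk, j, rfl⟩
    exact ⟨j, Nat.lt_of_mul_lt_mul_left hk, rfl⟩
  · rintro ⟨j, hj, rfl⟩
    exact ⟨Nat.mul_lt_mul_of_pos_left hj (Nat.pos_of_ne_zero hd), dvd_mul_right d j⟩

theorem Nat.filter_dvd_divisors_eq_divisors_gcd {n : ℕ} (hn : n ≠ 0) (m : ℕ) :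
    {d ∈ n.divisors | d ∣ m} = (m.gcd n).divisors := by
  ext d
  simp [Nat.dvd_gcd_iff, Nat.gcd_eq_zero_iff, hn, and_comm]

theorem Nat.sum_totient_filter_dvd_divisors {n : ℕ} (hn : n ≠ 0) (k : ℕ) :
    ∑ d ∈ n.divisors with d ∣ k, φ d = k.gcd n := by
  rw [Nat.filter_dvd_divisors_eq_divisors_gcd hn, Nat.sum_totient]

theorem Nat.Coprime.sum_divisors_mul_eq_sum_sum {M : Type*} [AddCommMonoid M] {a b : ℕ}
    (hab : a.Coprime b) (f : ℕ → M) :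
    ∑ d ∈ (a * b).divisors, f d = ∑ x ∈ a.divisors, ∑ y ∈ b.divisors, f (x * y) := by
  rw [hab.divisors_mul, sum_map, ← sum_product']
  exact sum_attach _ fun x : ℕ × ℕ => f (x.1 * x.2)

namespace IsPrimitiveRoot

variable {R : Type*} [CommRing R] [IsDomain R] {ζ : R} {n : ℕ}

theorem sum_range_pow_mul (hζ : IsPrimitiveRoot ζ n) (m : ℕ) :
    ∑ j ∈ range n, ζ ^ (j * m) = if n ∣ m then (n : R) else 0 := by
  simp_rw [pow_mul']
  split_ifs with h
  · simp [(hζ.pow_eq_one_iff_dvd m).mpr h]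
  · have hne : ζ ^ m ≠ 1 := mt (hζ.pow_eq_one_iff_dvd m).mp h
    refine eq_zero_of_ne_zero_of_mul_left_eq_zero (sub_ne_zero.mpr hne.symm) ?_
    rw [mul_neg_geom_sum, ← pow_mul, mul_comm, pow_mul, hζ.pow_eq_one, one_pow, sub_self]

theorem sum_range_filter_dvd_pow_mul (hζ : IsPrimitiveRoot ζ n) {d : ℕ} (hd : d ∈ n.divisors)
    (m : ℕ) :
    ∑ k ∈ range n with d ∣ k, ζ ^ (k * m) = if n / d ∣ m then ((n / d : ℕ) : R) else 0 := by
  obtain ⟨hdn, hn⟩ := Nat.mem_divisors.mp hd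
  have hd0 : d ≠ 0 := ne_zero_of_dvd_ne_zero hn hdn
  have hζd : IsPrimitiveRoot (ζ ^ d) (n / d) :=
    hζ.pow (Nat.pos_of_ne_zero hn) (Nat.mul_div_cancel' hdn).symm
  conv_lhs => rw [← Nat.mul_div_cancel' hdn, filter_dvd_range_mul hd0,
    sum_image fun x _ y _ h => Nat.eq_of_mul_eq_mul_left (Nat.pos_of_ne_zero hd0) h]
  simp_rw [mul_assoc, pow_mul ζ d]
  exact hζd.sum_range_pow_mul m

theorem sum_range_gcd_mul_pow (hζ : IsPrimitiveRoot ζ n) (hn : n ≠ 0) (m : ℕ) :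
    ∑ k ∈ range n, (k.gcd n : R) * ζ ^ (k * m) =
      ((∑ d ∈ (m.gcd n).divisors, d * φ (n / d) : ℕ) : R) := by
  calc ∑ k ∈ range n, (k.gcd n : R) * ζ ^ (k * m)
      = ∑ d ∈ n.divisors, (φ d : R) * ∑ k ∈ range n with d ∣ k, ζ ^ (k * m) := by
        simp_rw [← Nat.sum_totient_filter_dvd_divisors hn, Nat.cast_sum, sum_mul, sum_filter]
        rw [sum_comm]
        simp_rw [mul_sum, mul_ite, mul_zero]
    _ = ∑ d ∈ n.divisors, (φ d : R) * if n / d ∣ m then ((n / d : ℕ) : R) else 0 :=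
        sum_congr rfl fun d hd => by rw [hζ.sum_range_filter_dvd_pow_mul hd]
    _ = ∑ d ∈ n.divisors, (φ (n / d) : R) * if d ∣ m then (d : R) else 0 := by
        rw [← Nat.sum_div_divisors]
        refine sum_congr rfl fun d hd => ?_
        rw [Nat.div_div_self (Nat.dvd_of_mem_divisors hd) hn]
    _ = _ := by
        rw [← Nat.filter_dvd_divisors_eq_divisors_gcd hn, sum_filter]
        push_cast
        simp_rw [mul_ite, mul_zero, mul_comm]

end IsPrimitiveRoot

theorem sum_Icc_gcd_mul_exp (n m : ℕ) (hn : n ≠ 0) :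
    ∑ k ∈ Icc 1 n, (k.gcd n : ℂ) * Complex.exp (-(2 * Real.pi * Complex.I * k * m / n)) =
      ((∑ d ∈ (m.gcd n).divisors, d * φ (n / d) : ℕ) : ℂ) := by
  set ζ := (Complex.exp (2 * Real.pi * Complex.I / n))⁻¹
  have hζ : IsPrimitiveRoot ζ n := (Complex.isPrimitiveRoot_exp n hn).inv
  have hexp (k : ℕ) : Complex.exp (-(2 * Real.pi * Complex.I * k * m / n)) = ζ ^ (k * m) := by
    rw [inv_pow, ← Complex.exp_nat_mul, ← Complex.exp_neg]
    push_cast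
    ring_nf
  simp_rw [hexp]
  rw [sum_Icc_one_eq_sum_range (by simp [pow_mul, hζ.pow_eq_one]), hζ.sum_range_gcd_mul_pow hn]

theorem dft_gcd_pq_values_general (p q m : ℕ) (hp : p.Prime) (hq : q.Prime)
    (hpq : p ≠ q) :
    (Nat.gcd m (p * q) = 1 →
      ∑ k ∈ Finset.Icc 1 (p * q), (Nat.gcd k (p * q) : ℂ) *
          Complex.exp (-(2 * Real.pi * Complex.I * k * m / (p * q))) =
        (Nat.totient (p * q) : ℂ)) ∧
    (Nat.gcd m (p * q) = p →
      ∑ k ∈ Finset.Icc 1 (p * q), (Nat.gcd k (p * q) : ℂ) *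
          Complex.exp (-(2 * Real.pi * Complex.I * k * m / (p * q))) =
        (2 * (p : ℂ) - 1) * ((q : ℂ) - 1)) ∧
    (Nat.gcd m (p * q) = q →
      ∑ k ∈ Finset.Icc 1 (p * q), (Nat.gcd k (p * q) : ℂ) *
          Complex.exp (-(2 * Real.pi * Complex.I * k * m / (p * q))) =
        ((p : ℂ) - 1) * (2 * (q : ℂ) - 1)) ∧
    (Nat.gcd m (p * q) = p * q →
      ∑ k ∈ Finset.Icc 1 (p * q), (Nat.gcd k (p * q) : ℂ) *
          Complex.exp (-(2 * Real.pi * Complex.I * k * m / (p * q))) =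
        (2 * (p : ℂ) - 1) * (2 * (q : ℂ) - 1)) := by
  have hcop : p.Coprime q := (Nat.coprime_primes hp hq).mpr hpq
  have hsum := sum_Icc_gcd_mul_exp (p * q) m (mul_ne_zero hp.ne_zero hq.ne_zero)
  rw [Nat.cast_mul] at hsum
  have hφp : (φ p : ℂ) = p - 1 := by rw [Nat.totient_prime hp, Nat.cast_pred hp.pos]
  have hφq : (φ q : ℂ) = q - 1 := by rw [Nat.totient_prime hq, Nat.cast_pred hq.pos]
  have hφpq : (φ (p * q) : ℂ) = (p - 1) * (q - 1) := by
    rw [Nat.totient_mul hcop, Nat.cast_mul, hφp, hφq]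
  simp only [hsum]
  refine ⟨fun hg => ?_, fun hg => ?_, fun hg => ?_, fun hg => ?_⟩ <;> rw [hg]
  · simp
  · simp [hp, hp.ne_zero, hφpq, hφq]
    ring
  · simp [hq, hq.ne_zero, hφpq, hφp]
    ring
  · rw [hcop.sum_divisors_mul_eq_sum_sum]
    simp [hp, hq, hp.ne_zero, hq.ne_zero, Nat.div_self (mul_pos hp.pos hq.pos), hφpq, hφp, hφq]
    ring

theorem dft_gcd_pq_values (p q m : ℕ) (hp : p.Prime) (hq : q.Prime)
    (hpq : p ≠ q) (hm1 : 1 ≤ m) (hmn : m ≤ p * q) :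
    (Nat.gcd m (p * q) = 1 →
      ∑ k ∈ Finset.Icc 1 (p * q), (Nat.gcd k (p * q) : ℂ) *
          Complex.exp (-(2 * Real.pi * Complex.I * k * m / (p * q))) =
        (Nat.totient (p * q) : ℂ)) ∧
    (Nat.gcd m (p * q) = p →
      ∑ k ∈ Finset.Icc 1 (p * q), (Nat.gcd k (p * q) : ℂ) *
          Complex.exp (-(2 * Real.pi * Complex.I * k * m / (p * q))) =
        (2 * (p : ℂ) - 1) * ((q : ℂ) - 1)) ∧
    (Nat.gcd m (p * q) = q →
      ∑ k ∈ Finset.Icc 1 (p * q), (Nat.gcd k (p * q) : ℂ) *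
          Complex.exp (-(2 * Real.pi * Complex.I * k * m / (p * q))) =
        ((p : ℂ) - 1) * (2 * (q : ℂ) - 1)) ∧
    (Nat.gcd m (p * q) = p * q →
      ∑ k ∈ Finset.Icc 1 (p * q), (Nat.gcd k (p * q) : ℂ) *
          Complex.exp (-(2 * Real.pi * Complex.I * k * m / (p * q))) =
        (2 * (p : ℂ) - 1) * (2 * (q : ℂ) - 1)) :=
  dft_gcd_pq_values_general p q m hp hq hpq
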